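/- Connection between modified Al-Salam–Chihara polynomials and q-Hermite polynomials with the rescaled normalization: for all n ≥ 0, P_n(x|y,ρ,q) = ∑_{j=0}^{n} [n choose j]_q ρ^{n-j} B_{n-j}(y|q) H_j(x|q), and H_n(x|q) = ∑_{j=0}^{n} [n choose j]_q ρ^{n-j} H_{n-j}(y|q) P_j(x|y,ρ,q). -/
import Mathlib


/-- The Gaussian (q-)binomial coefficient, defined via the q-Pascal rule. -/
def gaussBinom (q : ℂ) : ℕ → ℕ → ℂ
  | _, 0 => 1
  | 0, _ + 1 => 0
  | n + 1, k + 1 => gaussBinom q n k + q ^ (k + 1) * gaussBinom q n (k + 1)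

/-- `[n]_q = 1 + q + ... + q^{n-1}`. -/
noncomputable def qNat (q : ℂ) (n : ℕ) : ℂ := ∑ i ∈ Finset.range n, q ^ i

/-- The monic q-Hermite polynomials: `x H_n = H_{n+1} + [n]_q H_{n-1}`, `H_{-1}=0`, `H_0=1`. -/
noncomputable def qHermiteMonic (q x : ℂ) : ℕ → ℂ
  | 0 => 1
  | 1 => x
  | n + 2 => x * qHermiteMonic q x (n + 1) - qNat q (n + 1) * qHermiteMonic q x n

/-- `B_{n+1}(y|q) = -q^n y B_n(y|q) + q^{n-1} [n]_q B_{n-1}(y|q)`, `B_{-1}=0`, `B_0=1`. -/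
noncomputable def Bpoly (q y : ℂ) : ℕ → ℂ
  | 0 => 1
  | 1 => -y
  | n + 2 => -q ^ (n + 1) * y * Bpoly q y (n + 1) + q ^ n * qNat q (n + 1) * Bpoly q y n

/-- The modified Al-Salam–Chihara polynomials:
`P_{n+1} = (x - ρ y q^n) P_n - (1 - ρ² q^{n-1})[n]_q P_{n-1}`, `P_{-1}=0`, `P_0=1`. -/
noncomputable def Ppoly (q y ρ x : ℂ) : ℕ → ℂ
  | 0 => 1
  | 1 => x - ρ * y
  | n + 2 => (x - ρ * y * q ^ (n + 1)) * Ppoly q y ρ x (n + 1)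
      - (1 - ρ ^ 2 * q ^ n) * qNat q (n + 1) * Ppoly q y ρ x n

lemma gauss_zero (q : ℂ) (n : ℕ) : gaussBinom q n 0 = 1 := by cases n <;> rfl

lemma gauss_succ (q : ℂ) (n k : ℕ) :
    gaussBinom q (n+1) (k+1) = gaussBinom q n k + q ^ (k+1) * gaussBinom q n (k+1) := rfl

lemma qh_succ (q x : ℂ) (n : ℕ) :
    qHermiteMonic q x (n+2) = x * qHermiteMonic q x (n+1) - qNat q (n+1) * qHermiteMonic q x n := rfl

lemma qNat_zero (q : ℂ) : qNat q 0 = 0 := by simp [qNat]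
lemma qNat_one (q : ℂ) : qNat q 1 = 1 := by simp [qNat]
lemma qNat_add (q : ℂ) (a b : ℕ) : qNat q (a + b) = qNat q a + q ^ a * qNat q b := by
  induction b with
  | zero => simp [qNat]
  | succ b ih =>
    have h1 : qNat q (b+1) = qNat q b + q ^ b := by
      rw [qNat, Finset.sum_range_succ, ← qNat]
    rw [← Nat.add_assoc, qNat, Finset.sum_range_succ, ← qNat, ih, h1]
    ring

lemma qNat_succ (q : ℂ) (n : ℕ) : qNat q (n+1) = qNat q n + q ^ n := by
  rw [qNat, Finset.sum_range_succ, ← qNat]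

lemma gauss_vanish (q : ℂ) : ∀ n k : ℕ, n < k → gaussBinom q n k = 0 := by
  intro n
  induction n with
  | zero =>
    intro k hk
    match k, hk with
    | k+1, _ => rfl
  | succ n ih =>
    intro k hk
    match k, hk with
    | k+1, hk =>
      rw [gauss_succ, ih k (by omega), ih (k+1) (by omega)]
      ring

lemma gauss_one (q : ℂ) : ∀ n : ℕ, gaussBinom q n 1 = qNat q n := by
  intro n
  induction n with
  | zero => rw [qNat_zero]; rfl
  | succ n ih =>
    rw [gauss_succ, gauss_zero, ih]
    have : qNat q (n+1) = qNat q 1 + q ^ 1 * qNat q n := by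
      rw [← qNat_add]; norm_num [Nat.add_comm]
    rw [this, qNat_one]

lemma G5 (q : ℂ) : ∀ n j : ℕ, qNat q (n - j) * gaussBinom q n j
    = qNat q (j+1) * gaussBinom q n (j+1) := by
  intro n
  induction n with
  | zero =>
    intro j
    cases j with
    | zero => simp [qNat_zero, gauss_vanish q 0 1 (by omega)]
    | succ j => simp [qNat_zero, gauss_vanish q 0 (j+2) (by omega)]
  | succ n ih =>
    intro j
    cases j with
    | zero =>
      rw [Nat.sub_zero, gauss_zero, gauss_one, qNat_one, mul_one, one_mul]
    | succ k =>
      rw [gauss_succ, gauss_succ q n (k+1)]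
      have e1 : n + 1 - (k+1) = n - k := by omega
      rw [e1]
      rcases Nat.lt_or_ge k n with h | h
      · -- k < n
        have e2 : qNat q (n - k) * gaussBinom q n k = qNat q (k+1) * gaussBinom q n (k+1) := ih k
        have e3 : qNat q (n - (k+1)) * gaussBinom q n (k+1) = qNat q (k+2) * gaussBinom q n (k+2) := ih (k+1)
        have e4 : qNat q (n+1) = qNat q (k+1) + q ^ (k+1) * qNat q (n - k) := by
          have : n + 1 = (k+1) + (n - k) := by omega
          rw [this, qNat_add]
        have e5 : qNat q (n+1) = qNat q (k+2) + q ^ (k+2) * qNat q (n - (k+1)) := by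
          have : n + 1 = (k+2) + (n - (k+1)) := by omega
          rw [this, qNat_add]
        -- goal: [n-k]*(C n k + q^{k+1} C n (k+1)) = [k+2]*(C n (k+1) + q^{k+2} C n (k+2))
        calc qNat q (n-k) * (gaussBinom q n k + q ^ (k+1) * gaussBinom q n (k+1))
            = qNat q (n-k) * gaussBinom q n k + q ^ (k+1) * (qNat q (n-k) * gaussBinom q n (k+1)) := by ring
          _ = qNat q (k+1) * gaussBinom q n (k+1) + q ^ (k+1) * (qNat q (n-k) * gaussBinom q n (k+1)) := by rw [e2]
          _ = qNat q (n+1) * gaussBinom q n (k+1) := by rw [e4]; ring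
          _ = qNat q (k+2) * gaussBinom q n (k+1) + q ^ (k+2) * (qNat q (n - (k+1)) * gaussBinom q n (k+1)) := by rw [e5]; ring
          _ = qNat q (k+2) * (gaussBinom q n (k+1) + q ^ (k+2) * gaussBinom q n (k+2)) := by rw [e3]; ring
      · -- k ≥ n : C n (k+1) = 0, C n (k+2) = 0
        rw [gauss_vanish q n (k+1) (by omega), gauss_vanish q n (k+2) (by omega)]
        have : n - k = 0 := by omega
        rw [this, qNat_zero]
        ring

lemma G2 (q : ℂ) (n j : ℕ) : qNat q (n + 1 - j) * gaussBinom q (n+1) j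
    = qNat q (n+1) * gaussBinom q n j := by
  cases j with
  | zero => rw [Nat.sub_zero, gauss_zero, gauss_zero]
  | succ k =>
    rw [gauss_succ]
    have e1 : n + 1 - (k+1) = n - k := by omega
    rw [e1]
    rcases Nat.lt_or_ge k n with h | h
    · have e2 : qNat q (n - k) * gaussBinom q n k = qNat q (k+1) * gaussBinom q n (k+1) := G5 q n k
      have e4 : qNat q (n+1) = qNat q (k+1) + q ^ (k+1) * qNat q (n - k) := by
        have : n + 1 = (k+1) + (n - k) := by omega
        rw [this, qNat_add]
      calc qNat q (n-k) * (gaussBinom q n k + q ^ (k+1) * gaussBinom q n (k+1))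
          = qNat q (n-k) * gaussBinom q n k + q ^ (k+1) * (qNat q (n-k) * gaussBinom q n (k+1)) := by ring
        _ = qNat q (k+1) * gaussBinom q n (k+1) + q ^ (k+1) * (qNat q (n-k) * gaussBinom q n (k+1)) := by rw [e2]
        _ = qNat q (n+1) * gaussBinom q n (k+1) := by rw [e4]; ring
    · rw [gauss_vanish q n (k+1) (by omega)]
      have : n - k = 0 := by omega
      rw [this, qNat_zero]
      ring

lemma G3 (q : ℂ) (n j : ℕ) : qNat q (j+1) * gaussBinom q (n+1) (j+1)
    = qNat q (n+1) * gaussBinom q n j := by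
  rw [← G5 q (n+1) j]
  exact G2 q n j

lemma connection_general (x : ℂ) (p h : ℕ → ℂ) (A : ℕ → ℕ → ℂ) (α β δ γ : ℕ → ℂ)
    (hA0 : ∀ n j, n < j → A n j = 0)
    (hp0 : p 0 = A 0 0 * h 0)
    (hp1 : p 1 = A 1 0 * h 0 + A 1 1 * h 1)
    (hprec : ∀ n, p (n+2) = (x - α (n+1)) * p (n+1) - β (n+1) * p n)
    (hh0 : x * h 0 = h 1 + δ 0 * h 0)
    (hh : ∀ j, x * h (j+1) = h (j+2) + δ (j+1) * h (j+1) + γ (j+1) * h j)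
    (hK0 : ∀ n, A (n+2) 0 = γ 1 * A (n+1) 1 + (δ 0 - α (n+1)) * A (n+1) 0 - β (n+1) * A n 0)
    (hK : ∀ n k, A (n+2) (k+1) = A (n+1) k + γ (k+2) * A (n+1) (k+2)
        + (δ (k+1) - α (n+1)) * A (n+1) (k+1) - β (n+1) * A n (k+1)) :
    ∀ n, p n = ∑ j ∈ Finset.range (n+1), A n j * h j := by
  have key : ∀ n : ℕ, p n = (∑ j ∈ Finset.range (n+1), A n j * h j) ∧
      p (n+1) = ∑ j ∈ Finset.range (n+2), A (n+1) j * h j := by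
    intro n
    induction n with
    | zero =>
      constructor
      · simpa using hp0
      · show p 1 = ∑ j ∈ Finset.range 2, A 1 j * h j
        rw [Finset.sum_range_succ, Finset.sum_range_one, hp1]
    | succ n ih =>
      obtain ⟨ih0, ih1⟩ := ih
      refine ⟨ih1, ?_⟩
      show p (n+2) = ∑ j ∈ Finset.range (n+3), A (n+2) j * h j
      rw [hprec n, ih1, ih0]
      -- auxiliary equalities
      have hx : x * (∑ j ∈ Finset.range (n+2), A (n+1) j * h j)
          = (∑ i ∈ Finset.range (n+1), A (n+1) (i+1) * h (i+2))
            + (∑ i ∈ Finset.range (n+1), δ (i+1) * (A (n+1) (i+1) * h (i+1)))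
            + (∑ i ∈ Finset.range (n+1), γ (i+1) * (A (n+1) (i+1) * h i))
            + A (n+1) 0 * h 1 + δ 0 * (A (n+1) 0 * h 0) := by
        rw [Finset.mul_sum, Finset.sum_range_succ']
        rw [show (∑ i ∈ Finset.range (n+1), x * (A (n+1) (i+1) * h (i+1)))
            = ∑ i ∈ Finset.range (n+1), (A (n+1) (i+1) * h (i+2)
                + δ (i+1) * (A (n+1) (i+1) * h (i+1))
                + γ (i+1) * (A (n+1) (i+1) * h i)) from
          Finset.sum_congr rfl (fun i _ => by linear_combination A (n+1) (i+1) * hh i)]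
        rw [Finset.sum_add_distrib, Finset.sum_add_distrib]
        linear_combination A (n+1) 0 * hh0
      have hS1 : (∑ j ∈ Finset.range (n+2), A (n+1) j * h j)
          = (∑ i ∈ Finset.range (n+1), A (n+1) (i+1) * h (i+1)) + A (n+1) 0 * h 0 :=
        Finset.sum_range_succ' _ _
      have hS0 : (∑ j ∈ Finset.range (n+1), A n j * h j)
          = (∑ i ∈ Finset.range n, A n (i+1) * h (i+1)) + A n 0 * h 0 :=
        Finset.sum_range_succ' _ _
      have hT : (∑ j ∈ Finset.range (n+3), A (n+2) j * h j)
          = (∑ i ∈ Finset.range (n+2), A (n+2) (i+1) * h (i+1)) + A (n+2) 0 * h 0 :=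
        Finset.sum_range_succ' _ _
      have hW : (∑ i ∈ Finset.range (n+2), A (n+2) (i+1) * h (i+1))
          = (∑ i ∈ Finset.range (n+2), A (n+1) i * h (i+1))
            + (∑ i ∈ Finset.range (n+2), γ (i+2) * (A (n+1) (i+2) * h (i+1)))
            + (∑ i ∈ Finset.range (n+2), (δ (i+1) - α (n+1)) * (A (n+1) (i+1) * h (i+1)))
            - (∑ i ∈ Finset.range (n+2), β (n+1) * (A n (i+1) * h (i+1))) := by
        rw [show (∑ i ∈ Finset.range (n+2), A (n+2) (i+1) * h (i+1))
            = ∑ i ∈ Finset.range (n+2), (A (n+1) i * h (i+1)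
                + γ (i+2) * (A (n+1) (i+2) * h (i+1))
                + (δ (i+1) - α (n+1)) * (A (n+1) (i+1) * h (i+1))
                - β (n+1) * (A n (i+1) * h (i+1))) from
          Finset.sum_congr rfl (fun i _ => by rw [hK n i]; ring)]
        rw [Finset.sum_sub_distrib, Finset.sum_add_distrib, Finset.sum_add_distrib]
      have r1 : (∑ i ∈ Finset.range (n+2), A (n+1) i * h (i+1))
          = (∑ i ∈ Finset.range (n+1), A (n+1) (i+1) * h (i+2)) + A (n+1) 0 * h 1 :=
        Finset.sum_range_succ' (fun i => A (n+1) i * h (i+1)) (n+1)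
      have r2' : (∑ i ∈ Finset.range (n+3), γ (i+1) * (A (n+1) (i+1) * h i))
          = (∑ i ∈ Finset.range (n+2), γ (i+2) * (A (n+1) (i+2) * h (i+1)))
            + γ 1 * (A (n+1) 1 * h 0) :=
        Finset.sum_range_succ' (fun i => γ (i+1) * (A (n+1) (i+1) * h i)) (n+2)
      have r2'' : (∑ i ∈ Finset.range (n+3), γ (i+1) * (A (n+1) (i+1) * h i))
          = ∑ i ∈ Finset.range (n+1), γ (i+1) * (A (n+1) (i+1) * h i) := by
        refine (Finset.sum_subset (Finset.range_subset_range.2 (by omega)) ?_).symm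
        intro i _ hi
        rw [Finset.mem_range, not_lt] at hi
        rw [hA0 (n+1) (i+1) (by omega)]
        ring
      have r2 : (∑ i ∈ Finset.range (n+2), γ (i+2) * (A (n+1) (i+2) * h (i+1)))
          = (∑ i ∈ Finset.range (n+1), γ (i+1) * (A (n+1) (i+1) * h i))
            - γ 1 * (A (n+1) 1 * h 0) := by
        linear_combination r2'' - r2'
      have r3a : (∑ i ∈ Finset.range (n+2), (δ (i+1) - α (n+1)) * (A (n+1) (i+1) * h (i+1)))
          = (∑ i ∈ Finset.range (n+1), δ (i+1) * (A (n+1) (i+1) * h (i+1)))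
            - α (n+1) * (∑ i ∈ Finset.range (n+1), A (n+1) (i+1) * h (i+1)) := by
        have pad : (∑ i ∈ Finset.range (n+2), (δ (i+1) - α (n+1)) * (A (n+1) (i+1) * h (i+1)))
            = ∑ i ∈ Finset.range (n+1), (δ (i+1) - α (n+1)) * (A (n+1) (i+1) * h (i+1)) := by
          refine (Finset.sum_subset (Finset.range_subset_range.2 (by omega)) ?_).symm
          intro i _ hi
          rw [Finset.mem_range, not_lt] at hi
          rw [hA0 (n+1) (i+1) (by omega)]
          ring
        rw [pad, Finset.mul_sum, ← Finset.sum_sub_distrib]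
        exact Finset.sum_congr rfl (fun i _ => by ring)
      have r4 : (∑ i ∈ Finset.range (n+2), β (n+1) * (A n (i+1) * h (i+1)))
          = β (n+1) * (∑ i ∈ Finset.range n, A n (i+1) * h (i+1)) := by
        have pad : (∑ i ∈ Finset.range (n+2), β (n+1) * (A n (i+1) * h (i+1)))
            = ∑ i ∈ Finset.range n, β (n+1) * (A n (i+1) * h (i+1)) := by
          refine (Finset.sum_subset (Finset.range_subset_range.2 (by omega)) ?_).symm
          intro i _ hi
          rw [Finset.mem_range, not_lt] at hi
          rw [hA0 n (i+1) (by omega)]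
          ring
        rw [pad, Finset.mul_sum]
      rw [hT, hW, r1, r2, r3a, r4, hK0 n]
      linear_combination hx - α (n+1) * hS1 - β (n+1) * hS0
  exact fun n => (key n).1


lemma B_succ (q y : ℂ) (n : ℕ) : Bpoly q y (n+2)
    = -q^(n+1)*y*Bpoly q y (n+1) + q^n*qNat q (n+1)*Bpoly q y n := rfl

lemma P_succ (q y ρ x : ℂ) (n : ℕ) : Ppoly q y ρ x (n+2)
    = (x - ρ*y*q^(n+1))*Ppoly q y ρ x (n+1)
      - (1-ρ^2*q^n)*qNat q (n+1)*Ppoly q y ρ x n := rfl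

lemma part1 (q x y ρ : ℂ) (n : ℕ) : Ppoly q y ρ x n
    = ∑ j ∈ Finset.range (n+1),
        gaussBinom q n j * ρ^(n-j) * Bpoly q y (n-j) * qHermiteMonic q x j := by
  have hA0 : ∀ n j : ℕ, n < j →
      gaussBinom q n j * ρ^(n-j) * Bpoly q y (n-j) = 0 := by
    intro n j hnj
    rw [gauss_vanish q n j hnj]
    ring
  exact connection_general x (Ppoly q y ρ x) (qHermiteMonic q x)
    (fun n j => gaussBinom q n j * ρ^(n-j) * Bpoly q y (n-j))
    (fun m => ρ*y*q^m) (fun m => (1-ρ^2*q^(m-1))*qNat q m)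
    (fun _ => 0) (fun j => qNat q j)
    hA0
    (by show (1:ℂ) = gaussBinom q 0 0 * ρ^0 * Bpoly q y 0 * 1
        show (1:ℂ) = 1 * ρ^0 * 1 * 1
        ring)
    (by show x - ρ*y = gaussBinom q 1 0 * ρ^1 * Bpoly q y 1 * 1
          + gaussBinom q 1 1 * ρ^0 * Bpoly q y 0 * x
        rw [gauss_zero, gauss_succ, gauss_zero, gauss_vanish q 0 1 (by omega)]
        show x - ρ*y = 1 * ρ^1 * (-y) * 1 + (1 + q^(0+1)*0) * ρ^0 * 1 * x
        ring)
    (by intro n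
        show Ppoly q y ρ x (n+2) = (x - ρ*y*q^(n+1)) * Ppoly q y ρ x (n+1)
          - ((1-ρ^2*q^(n+1-1))*qNat q (n+1)) * Ppoly q y ρ x n
        rw [Nat.add_sub_cancel]
        exact P_succ q y ρ x n)
    (by show x * 1 = x + 0 * 1
        ring)
    (by intro j
        rw [qh_succ q x j]
        ring)
    (by -- hK0
      intro n
      show gaussBinom q (n+2) 0 * ρ^(n+2-0) * Bpoly q y (n+2-0)
          = qNat q 1 * (gaussBinom q (n+1) 1 * ρ^(n+1-1) * Bpoly q y (n+1-1))
            + (0 - ρ*y*q^(n+1)) * (gaussBinom q (n+1) 0 * ρ^(n+1-0) * Bpoly q y (n+1-0))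
            - (1-ρ^2*q^(n+1-1))*qNat q (n+1)
              * (gaussBinom q n 0 * ρ^(n-0) * Bpoly q y (n-0))
      rw [Nat.sub_zero, Nat.sub_zero, Nat.sub_zero, Nat.add_sub_cancel,
        gauss_zero, gauss_zero, gauss_zero, gauss_one, qNat_one, B_succ]
      ring)
    (by -- hK
      intro n k
      show gaussBinom q (n+2) (k+1) * ρ^(n+2-(k+1)) * Bpoly q y (n+2-(k+1))
          = gaussBinom q (n+1) k * ρ^(n+1-k) * Bpoly q y (n+1-k)
            + qNat q (k+2) * (gaussBinom q (n+1) (k+2) * ρ^(n+1-(k+2)) * Bpoly q y (n+1-(k+2)))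
            + (0 - ρ*y*q^(n+1)) * (gaussBinom q (n+1) (k+1) * ρ^(n+1-(k+1)) * Bpoly q y (n+1-(k+1)))
            - (1-ρ^2*q^(n+1-1))*qNat q (n+1)
              * (gaussBinom q n (k+1) * ρ^(n-(k+1)) * Bpoly q y (n-(k+1)))
      rw [Nat.add_sub_cancel]
      rcases Nat.lt_or_ge n k with hlt | hge
      · -- k ≥ n+1
        rcases Nat.exists_eq_add_of_lt hlt with ⟨t, ht⟩
        subst ht
        cases t with
        | zero =>
          simp only [Nat.add_zero]
          rw [show (n+2-(n+1+1) : ℕ) = 0 from by omega,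
            show (n+1-(n+1) : ℕ) = 0 from by omega,
            show (n+1-(n+1+1+1) : ℕ) = 0 from by omega,
            show (n+1-(n+1+1) : ℕ) = 0 from by omega,
            show (n-(n+1+1) : ℕ) = 0 from by omega]
          rw [show gaussBinom q (n+2) (n+1+1)
              = gaussBinom q (n+1) (n+1) + q^(n+1+1) * gaussBinom q (n+1) (n+1+1) from
            gauss_succ q (n+1) (n+1)]
          rw [gauss_vanish q (n+1) (n+1+1+1) (by omega),
            gauss_vanish q (n+1) (n+1+1) (by omega),
            gauss_vanish q n (n+1+1) (by omega)]
          ring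
        | succ t =>
          rw [gauss_vanish q (n+2) (n+(t+1)+1+1) (by omega),
            gauss_vanish q (n+1) (n+(t+1)+1) (by omega),
            gauss_vanish q (n+1) (n+(t+1)+1+2) (by omega),
            gauss_vanish q (n+1) (n+(t+1)+1+1) (by omega),
            gauss_vanish q n (n+(t+1)+1+1) (by omega)]
          ring
      · rcases Nat.exists_eq_add_of_le hge with ⟨r, hr⟩
        subst hr
        cases r with
        | zero =>
          simp only [Nat.add_zero]
          rw [show (k+2-(k+1) : ℕ) = 1 from by omega,
            show (k+1-k : ℕ) = 1 from by omega,
            show (k+1-(k+2) : ℕ) = 0 from by omega,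
            show (k+1-(k+1) : ℕ) = 0 from by omega,
            show (k-(k+1) : ℕ) = 0 from by omega]
          rw [show gaussBinom q (k+2) (k+1)
              = gaussBinom q (k+1) k + q^(k+1) * gaussBinom q (k+1) (k+1) from
            gauss_succ q (k+1) k]
          rw [gauss_vanish q (k+1) (k+2) (by omega),
            gauss_vanish q k (k+1) (by omega),
            show Bpoly q y 1 = -y from rfl, show Bpoly q y 0 = 1 from rfl]
          ring
        | succ r =>
          rw [show (k+(r+1)+2-(k+1) : ℕ) = r+2 from by omega,
            show (k+(r+1)+1-k : ℕ) = r+2 from by omega,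
            show (k+(r+1)+1-(k+2) : ℕ) = r from by omega,
            show (k+(r+1)+1-(k+1) : ℕ) = r+1 from by omega,
            show (k+(r+1)-(k+1) : ℕ) = r from by omega]
          have e1 : gaussBinom q (k+(r+1)+2) (k+1)
              = gaussBinom q (k+(r+1)+1) k + q^(k+1) * gaussBinom q (k+(r+1)+1) (k+1) :=
            gauss_succ q (k+(r+1)+1) k
          have e2 : Bpoly q y (r+2)
              = -q^(r+1)*y*Bpoly q y (r+1) + q^r*qNat q (r+1)*Bpoly q y r := B_succ q y r
          have e3 : qNat q (k+2) * gaussBinom q (k+(r+1)+1) (k+2)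
              = qNat q (k+(r+1)+1) * gaussBinom q (k+(r+1)) (k+1) := by
            have := G3 q (k+r+1) (k+1)
            rw [show (k+r+1+1 : ℕ) = k+(r+1)+1 from by omega] at this
            rw [show (k+r+1 : ℕ) = k+(r+1) from by omega] at this
            exact this
          have e4 : qNat q (r+1) * gaussBinom q (k+(r+1)+1) (k+1)
              = qNat q (k+(r+1)+1) * gaussBinom q (k+(r+1)) (k+1) := by
            have := G2 q (k+r+1) (k+1)
            rw [show (k+r+1+1-(k+1) : ℕ) = r+1 from by omega,
              show (k+r+1+1 : ℕ) = k+(r+1)+1 from by omega,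
              show (k+r+1 : ℕ) = k+(r+1) from by omega] at this
            exact this
          linear_combination (ρ^(r+2) * Bpoly q y (r+2)) * e1
            + (q^(k+1) * gaussBinom q (k+(r+1)+1) (k+1) * ρ^(r+2)) * e2
            + (q^(k+(r+1)) * ρ^(r+2) * Bpoly q y r) * e4
            - (ρ^r * Bpoly q y r) * e3)
    n

lemma part2 (q x y ρ : ℂ) (n : ℕ) : qHermiteMonic q x n
    = ∑ j ∈ Finset.range (n+1),
        gaussBinom q n j * ρ^(n-j) * qHermiteMonic q y (n-j) * Ppoly q y ρ x j := by
  have hA0 : ∀ n j : ℕ, n < j →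
      gaussBinom q n j * ρ^(n-j) * qHermiteMonic q y (n-j) = 0 := by
    intro n j hnj
    rw [gauss_vanish q n j hnj]
    ring
  exact connection_general x (qHermiteMonic q x) (Ppoly q y ρ x)
    (fun n j => gaussBinom q n j * ρ^(n-j) * qHermiteMonic q y (n-j))
    (fun _ => 0) (fun m => qNat q m)
    (fun j => ρ*y*q^j) (fun j => (1-ρ^2*q^(j-1))*qNat q j)
    hA0
    (by show (1:ℂ) = gaussBinom q 0 0 * ρ^0 * qHermiteMonic q y 0 * 1
        show (1:ℂ) = 1 * ρ^0 * 1 * 1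
        ring)
    (by show x = gaussBinom q 1 0 * ρ^1 * qHermiteMonic q y 1 * 1
          + gaussBinom q 1 1 * ρ^0 * qHermiteMonic q y 0 * (x - ρ*y)
        rw [gauss_zero, gauss_succ, gauss_zero, gauss_vanish q 0 1 (by omega)]
        show x = 1 * ρ^1 * y * 1 + (1 + q^(0+1)*0) * ρ^0 * 1 * (x - ρ*y)
        ring)
    (by intro n
        rw [qh_succ]
        ring)
    (by show x * 1 = (x - ρ*y) + ρ*y*q^0 * 1
        ring)
    (by intro j
        show x * Ppoly q y ρ x (j+1) = Ppoly q y ρ x (j+2)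
          + (ρ*y*q^(j+1)) * Ppoly q y ρ x (j+1)
          + ((1-ρ^2*q^(j+1-1))*qNat q (j+1)) * Ppoly q y ρ x j
        rw [Nat.add_sub_cancel, P_succ]
        ring)
    (by -- hK0
      intro n
      show gaussBinom q (n+2) 0 * ρ^(n+2-0) * qHermiteMonic q y (n+2-0)
          = (1-ρ^2*q^(1-1))*qNat q 1
              * (gaussBinom q (n+1) 1 * ρ^(n+1-1) * qHermiteMonic q y (n+1-1))
            + (ρ*y*q^0 - 0) * (gaussBinom q (n+1) 0 * ρ^(n+1-0) * qHermiteMonic q y (n+1-0))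
            - qNat q (n+1) * (gaussBinom q n 0 * ρ^(n-0) * qHermiteMonic q y (n-0))
      rw [Nat.sub_zero, Nat.sub_zero, Nat.sub_zero, Nat.add_sub_cancel,
        gauss_zero, gauss_zero, gauss_zero, gauss_one, qNat_one, qh_succ q y n]
      norm_num
      ring
    )
    (by -- hK
      intro n k
      show gaussBinom q (n+2) (k+1) * ρ^(n+2-(k+1)) * qHermiteMonic q y (n+2-(k+1))
          = gaussBinom q (n+1) k * ρ^(n+1-k) * qHermiteMonic q y (n+1-k)
            + (1-ρ^2*q^(k+2-1))*qNat q (k+2)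
              * (gaussBinom q (n+1) (k+2) * ρ^(n+1-(k+2)) * qHermiteMonic q y (n+1-(k+2)))
            + (ρ*y*q^(k+1) - 0)
              * (gaussBinom q (n+1) (k+1) * ρ^(n+1-(k+1)) * qHermiteMonic q y (n+1-(k+1)))
            - qNat q (n+1) * (gaussBinom q n (k+1) * ρ^(n-(k+1)) * qHermiteMonic q y (n-(k+1)))
      rw [show (k+2-1 : ℕ) = k+1 from by omega]
      rcases Nat.lt_or_ge n k with hlt | hge
      · rcases Nat.exists_eq_add_of_lt hlt with ⟨t, ht⟩
        subst ht
        cases t with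
        | zero =>
          simp only [Nat.add_zero]
          rw [show (n+2-(n+1+1) : ℕ) = 0 from by omega,
            show (n+1-(n+1) : ℕ) = 0 from by omega,
            show (n+1-(n+1+1+1) : ℕ) = 0 from by omega,
            show (n+1-(n+1+1) : ℕ) = 0 from by omega,
            show (n-(n+1+1) : ℕ) = 0 from by omega]
          rw [show gaussBinom q (n+2) (n+1+1)
              = gaussBinom q (n+1) (n+1) + q^(n+1+1) * gaussBinom q (n+1) (n+1+1) from
            gauss_succ q (n+1) (n+1)]
          rw [gauss_vanish q (n+1) (n+1+1+1) (by omega),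
            gauss_vanish q (n+1) (n+1+1) (by omega),
            gauss_vanish q n (n+1+1) (by omega)]
          ring
        | succ t =>
          rw [gauss_vanish q (n+2) (n+(t+1)+1+1) (by omega),
            gauss_vanish q (n+1) (n+(t+1)+1) (by omega),
            gauss_vanish q (n+1) (n+(t+1)+1+2) (by omega),
            gauss_vanish q (n+1) (n+(t+1)+1+1) (by omega),
            gauss_vanish q n (n+(t+1)+1+1) (by omega)]
          ring
      · rcases Nat.exists_eq_add_of_le hge with ⟨r, hr⟩
        subst hr
        cases r with
        | zero =>
          simp only [Nat.add_zero]
          rw [show (k+2-(k+1) : ℕ) = 1 from by omega,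
            show (k+1-k : ℕ) = 1 from by omega,
            show (k+1-(k+2) : ℕ) = 0 from by omega,
            show (k+1-(k+1) : ℕ) = 0 from by omega,
            show (k-(k+1) : ℕ) = 0 from by omega]
          rw [show gaussBinom q (k+2) (k+1)
              = gaussBinom q (k+1) k + q^(k+1) * gaussBinom q (k+1) (k+1) from
            gauss_succ q (k+1) k]
          rw [gauss_vanish q (k+1) (k+2) (by omega),
            gauss_vanish q k (k+1) (by omega),
            show qHermiteMonic q y 1 = y from rfl,
            show qHermiteMonic q y 0 = 1 from rfl]
          ring
        | succ r =>
          rw [show (k+(r+1)+2-(k+1) : ℕ) = r+2 from by omega,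
            show (k+(r+1)+1-k : ℕ) = r+2 from by omega,
            show (k+(r+1)+1-(k+2) : ℕ) = r from by omega,
            show (k+(r+1)+1-(k+1) : ℕ) = r+1 from by omega,
            show (k+(r+1)-(k+1) : ℕ) = r from by omega]
          have e1 : gaussBinom q (k+(r+1)+2) (k+1)
              = gaussBinom q (k+(r+1)+1) k + q^(k+1) * gaussBinom q (k+(r+1)+1) (k+1) :=
            gauss_succ q (k+(r+1)+1) k
          have e2 : qHermiteMonic q y (r+2)
              = y * qHermiteMonic q y (r+1) - qNat q (r+1) * qHermiteMonic q y r :=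
            qh_succ q y r
          have e3 : qNat q (k+2) * gaussBinom q (k+(r+1)+1) (k+2)
              = qNat q (k+(r+1)+1) * gaussBinom q (k+(r+1)) (k+1) := by
            have := G3 q (k+r+1) (k+1)
            rw [show (k+r+1+1 : ℕ) = k+(r+1)+1 from by omega] at this
            rw [show (k+r+1 : ℕ) = k+(r+1) from by omega] at this
            exact this
          have e5 : qNat q (r+1) * gaussBinom q (k+(r+1)+1) (k+1)
              = qNat q (k+2) * gaussBinom q (k+(r+1)+1) (k+2) := by
            have := G5 q (k+(r+1)+1) (k+1)
            rw [show (k+(r+1)+1-(k+1) : ℕ) = r+1 from by omega] at this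
            exact this
          linear_combination (ρ^(r+2) * qHermiteMonic q y (r+2)) * e1
            + (q^(k+1) * gaussBinom q (k+(r+1)+1) (k+1) * ρ^(r+2)) * e2
            - (ρ^r * qHermiteMonic q y r) * e3
            - (q^(k+1) * ρ^(r+2) * qHermiteMonic q y r) * e5)
    n

/-- Connection formulas between `P_n`, `B_n` and the monic q-Hermite polynomials:
`P_n(x|y,ρ,q) = ∑_j [n choose j]_q ρ^{n-j} B_{n-j}(y|q) H_j(x|q)` and
`H_n(x|q) = ∑_j [n choose j]_q ρ^{n-j} H_{n-j}(y|q) P_j(x|y,ρ,q)`. -/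
theorem Ppoly_qHermiteMonic_connection (q x y ρ : ℂ) (n : ℕ) :
    (Ppoly q y ρ x n =
      ∑ j ∈ Finset.range (n + 1),
        gaussBinom q n j * ρ ^ (n - j) * Bpoly q y (n - j) * qHermiteMonic q x j) ∧
    (qHermiteMonic q x n =
      ∑ j ∈ Finset.range (n + 1),
        gaussBinom q n j * ρ ^ (n - j) * qHermiteMonic q y (n - j) *
          Ppoly q y ρ x j) := by
  constructor
  · exact part1 q x y ρ n
  · exact part2 q x y ρ n
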